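/- arXiv:1407.5118 — 4 statements merged into one kernel-verified Lean document; each statement's English description precedes it below -/
import Mathlib

section
/- Let γ be a smooth symmetric closed strictly convex curve with minimum Minkowski curvature radius μ₀ = min_θ μ(θ), where μ = 1/k. Then μ₀ ≤ r_in, the radius of the largest inscribed 𝒫-circle, with equality only if γ is a 𝒫-circle. -/
open Real Set MeasureTheory

noncomputable section

def det2 (u v : ℝ × ℝ) : ℝ := u.1 * v.2 - u.2 * v.1

def er (θ : ℝ) : ℝ × ℝ := (Real.cos θ, Real.sin θ)

def eth (θ : ℝ) : ℝ × ℝ := (-Real.sin θ, Real.cos θ)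


/-- auxiliary dot product on `ℝ × ℝ`. -/
def dotp (u v : ℝ × ℝ) : ℝ := u.1 * v.1 + u.2 * v.2

lemma dotp_smul (s : ℝ) (u v : ℝ × ℝ) : dotp (s • u) v = s * dotp u v := by
  simp only [dotp, Prod.smul_fst, Prod.smul_snd, smul_eq_mul]; ring

lemma eq_zero_of_smul_eth {v θ : ℝ} (h : v • eth θ = 0) : v = 0 := by
  have h1 : v * (-Real.sin θ) = 0 := congrArg Prod.fst h
  have h2 : v * Real.cos θ = 0 := congrArg Prod.snd h
  have := sin_sq_add_cos_sq θ
  nlinarith [sq_nonneg v]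

lemma er_add_two_pi (θ : ℝ) : er (θ + 2 * π) = er θ := by
  simp [er, Real.cos_add_two_pi, Real.sin_add_two_pi]

lemma eth_add_two_pi (θ : ℝ) : eth (θ + 2 * π) = eth θ := by
  simp [eth, Real.cos_add_two_pi, Real.sin_add_two_pi]

lemma er_add_pi (θ : ℝ) : er (θ + π) = -er θ := by
  simp [er, Real.cos_add_pi, Real.sin_add_pi, Prod.neg_mk]

lemma eth_add_pi (θ : ℝ) : eth (θ + π) = -eth θ := by
  simp [eth, Real.cos_add_pi, Real.sin_add_pi, Prod.neg_mk]

lemma hasDerivAt_p (a : ℝ → ℝ) (haD : Differentiable ℝ a) (ha'D : Differentiable ℝ (deriv a))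
    (p : ℝ → ℝ × ℝ) (hp : ∀ θ, p θ = a θ • er θ + deriv a θ • eth θ) (θ : ℝ) :
    HasDerivAt p ((a θ + deriv (deriv a) θ) • eth θ) θ := by
  have hp' : p = fun θ => (a θ * Real.cos θ + deriv a θ * (-Real.sin θ),
      a θ * Real.sin θ + deriv a θ * Real.cos θ) := by
    funext θ; rw [hp θ]; simp [er, eth, Prod.ext_iff]
  rw [hp']
  have h1 : HasDerivAt (fun θ => a θ * Real.cos θ + deriv a θ * (-Real.sin θ))
      (deriv a θ * Real.cos θ + a θ * (-Real.sin θ) +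
        (deriv (deriv a) θ * (-Real.sin θ) + deriv a θ * (-Real.cos θ))) θ :=
    (((haD θ).hasDerivAt.mul (Real.hasDerivAt_cos θ)).add
      ((ha'D θ).hasDerivAt.mul ((Real.hasDerivAt_sin θ).neg)))
  have h2 : HasDerivAt (fun θ => a θ * Real.sin θ + deriv a θ * Real.cos θ)
      (deriv a θ * Real.sin θ + a θ * Real.cos θ +
        (deriv (deriv a) θ * Real.cos θ + deriv a θ * (-Real.sin θ))) θ :=
    (((haD θ).hasDerivAt.mul (Real.hasDerivAt_sin θ)).add
      ((ha'D θ).hasDerivAt.mul (Real.hasDerivAt_cos θ)))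
  convert h1.prodMk h2 using 1
  simp [eth, Prod.ext_iff]
  constructor <;> ring

lemma hasDerivAt_g (γ : ℝ → ℝ × ℝ) (m : ℝ) (θ : ℝ)
    (hγD : HasDerivAt γ (m • eth θ) θ) :
    HasDerivAt (fun ψ => dotp (γ ψ) (er ψ)) (dotp (γ θ) (eth θ)) θ := by
  have hf1 : HasDerivAt (fun t => (γ t).1) (m • eth θ).1 θ := hγD.fst
  have hf2 : HasDerivAt (fun t => (γ t).2) (m • eth θ).2 θ := hγD.snd
  have h1 : HasDerivAt (fun ψ => (γ ψ).1 * Real.cos ψ + (γ ψ).2 * Real.sin ψ)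
      ((m • eth θ).1 * Real.cos θ + (γ θ).1 * (-Real.sin θ) +
        ((m • eth θ).2 * Real.sin θ + (γ θ).2 * Real.cos θ)) θ :=
    (hf1.mul (Real.hasDerivAt_cos θ)).add (hf2.mul (Real.hasDerivAt_sin θ))
  have he : (m • eth θ).1 * Real.cos θ + (γ θ).1 * (-Real.sin θ) +
        ((m • eth θ).2 * Real.sin θ + (γ θ).2 * Real.cos θ) = dotp (γ θ) (eth θ) := by
    simp only [eth, dotp, er, Prod.smul_mk, smul_eq_mul]
    ring
  rw [he] at h1
  exact h1

lemma hasDerivAt_h (γ : ℝ → ℝ × ℝ) (m : ℝ) (θ : ℝ)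
    (hγD : HasDerivAt γ (m • eth θ) θ) :
    HasDerivAt (fun ψ => dotp (γ ψ) (eth ψ)) (m - dotp (γ θ) (er θ)) θ := by
  have hf1 : HasDerivAt (fun t => (γ t).1) (m • eth θ).1 θ := hγD.fst
  have hf2 : HasDerivAt (fun t => (γ t).2) (m • eth θ).2 θ := hγD.snd
  have h1 : HasDerivAt (fun ψ => (γ ψ).1 * (-Real.sin ψ) + (γ ψ).2 * Real.cos ψ)
      ((m • eth θ).1 * (-Real.sin θ) + (γ θ).1 * (-Real.cos θ) +
        ((m • eth θ).2 * Real.cos θ + (γ θ).2 * (-Real.sin θ))) θ :=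
    (hf1.mul ((Real.hasDerivAt_sin θ).neg)).add (hf2.mul (Real.hasDerivAt_cos θ))
  have he : (m • eth θ).1 * (-Real.sin θ) + (γ θ).1 * (-Real.cos θ) +
        ((m • eth θ).2 * Real.cos θ + (γ θ).2 * (-Real.sin θ)) = m - dotp (γ θ) (er θ) := by
    simp only [eth, dotp, er, Prod.smul_mk, smul_eq_mul]
    linear_combination m * Real.sin_sq_add_cos_sq θ
  rw [he] at h1
  exact h1

lemma hasDerivAt_F (p : ℝ → ℝ × ℝ) (m ψ φ : ℝ) (hpD : HasDerivAt p (m • eth φ) φ) :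
    HasDerivAt (fun t => dotp (p t) (er ψ)) (m * Real.sin (ψ - φ)) φ := by
  have hf1 : HasDerivAt (fun t => (p t).1) (m • eth φ).1 φ := hpD.fst
  have hf2 : HasDerivAt (fun t => (p t).2) (m • eth φ).2 φ := hpD.snd
  have h1 : HasDerivAt (fun t => (p t).1 * Real.cos ψ + (p t).2 * Real.sin ψ)
      ((m • eth φ).1 * Real.cos ψ + (m • eth φ).2 * Real.sin ψ) φ :=
    (hf1.mul_const _).add (hf2.mul_const _)
  have he : (m • eth φ).1 * Real.cos ψ + (m • eth φ).2 * Real.sin ψ = m * Real.sin (ψ - φ) := by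
    simp only [eth, Prod.smul_mk, smul_eq_mul, Real.sin_sub]
    ring
  rw [he] at h1
  exact h1

/-- The minimum curvature radius is at most the inradius, with equality only
for a `𝒫`-circle. -/
theorem stmt10 (a : ℝ → ℝ) (ha : ContDiff ℝ (⊤ : ℕ∞) a) (haper : Function.Periodic a (2 * π))
    (hapos : ∀ θ, 0 < a θ) (hconv : ∀ θ, 0 < a θ + deriv (deriv a) θ)
    (p : ℝ → ℝ × ℝ) (hp : ∀ θ, p θ = a θ • er θ + deriv a θ • eth θ)
    (q : ℝ → ℝ × ℝ) (hq : ∀ θ, q θ = (det2 (p θ) (deriv p θ))⁻¹ • deriv p θ)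
    (hasym : ∀ θ, a (θ + π) = a θ)
    (γ : ℝ → ℝ × ℝ) (hγ : ContDiff ℝ (⊤ : ℕ∞) γ) (hγper : Function.Periodic γ (2 * π))
    (μ : ℝ → ℝ) (hμpos : ∀ θ, 0 < μ θ) (hμcont : Continuous μ)
    (hγd : ∀ θ, deriv γ θ = (μ θ * det2 (p θ) (deriv p θ)) • q θ)
    (hγsym : ∀ θ, γ (θ + π) = -γ θ)
    (hsimple : Set.InjOn γ (Set.Ico 0 (2 * π)))
    (μ0 : ℝ) (hμ0 : μ0 = sInf (Set.range μ))
    (K PB : Set (ℝ × ℝ)) (hK : K = convexHull ℝ (Set.range γ))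
    (hPB : PB = convexHull ℝ (Set.range p))
    (rin : ℝ) (hrin : rin = sSup {r : ℝ | 0 ≤ r ∧ ∃ x : ℝ × ℝ, (fun y => x + r • y) '' PB ⊆ K}) :
    μ0 ≤ rin ∧ (μ0 = rin → (∃ c : ℝ × ℝ, ∃ r : ℝ, 0 < r ∧ ∀ θ, γ θ = c + r • p θ)) := by
  have two_pi_pos : (0:ℝ) < 2 * π := by positivity
  -- smoothness facts
  have haD : Differentiable ℝ a := ha.differentiable (by simp)
  have haT : ContDiff ℝ ((⊤:ℕ∞):WithTop ℕ∞) a := ha.of_le (by simp)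
  have ha'T := (contDiff_infty_iff_deriv.mp haT).2
  have ha'D : Differentiable ℝ (deriv a) := (contDiff_infty_iff_deriv.mp ha'T).1
  have ha''C : Continuous (deriv (deriv a)) := (contDiff_infty_iff_deriv.mp ha'T).2.continuous
  have haC : Continuous a := haD.continuous
  have ha'C : Continuous (deriv a) := ha'D.continuous
  have hγD' : Differentiable ℝ γ := hγ.differentiable (by simp)
  have hγC : Continuous γ := hγD'.continuous
  -- derivative of p
  have hpD : ∀ θ, HasDerivAt p ((a θ + deriv (deriv a) θ) • eth θ) θ :=
    hasDerivAt_p a haD ha'D p hp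
  have hdp : ∀ θ, deriv p θ = (a θ + deriv (deriv a) θ) • eth θ := fun θ => (hpD θ).deriv
  have hpDiff : Differentiable ℝ p := fun θ => (hpD θ).differentiableAt
  -- determinant
  have hdet : ∀ θ, det2 (p θ) (deriv p θ) = a θ * (a θ + deriv (deriv a) θ) := by
    intro θ
    rw [hp θ, hdp θ]
    simp only [det2, er, eth, Prod.smul_mk, smul_eq_mul, Prod.mk_add_mk, Prod.fst, Prod.snd]
    linear_combination (a θ * (a θ + deriv (deriv a) θ)) * Real.sin_sq_add_cos_sq θ
  have hdetpos : ∀ θ, 0 < det2 (p θ) (deriv p θ) := fun θ =>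
    (hdet θ) ▸ mul_pos (hapos θ) (hconv θ)
  -- derivative of γ
  have hdγ : ∀ θ, deriv γ θ = (μ θ * (a θ + deriv (deriv a) θ)) • eth θ := by
    intro θ
    rw [hγd θ, hq θ, smul_smul, mul_inv_cancel_right₀ (hdetpos θ).ne', hdp θ, smul_smul]
  have hγDir : ∀ θ, HasDerivAt γ ((μ θ * (a θ + deriv (deriv a) θ)) • eth θ) θ := fun θ =>
    (hdγ θ) ▸ (hγD' θ).hasDerivAt
  -- g and h
  set g : ℝ → ℝ := fun θ => dotp (γ θ) (er θ) with hgdef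
  have hgD : ∀ θ, HasDerivAt g (dotp (γ θ) (eth θ)) θ := fun θ =>
    hasDerivAt_g γ _ θ (hγDir θ)
  have hhD : ∀ θ, HasDerivAt (fun ψ => dotp (γ ψ) (eth ψ))
      (μ θ * (a θ + deriv (deriv a) θ) - g θ) θ := fun θ => hasDerivAt_h γ _ θ (hγDir θ)
  have hgC : Continuous g := by
    apply Continuous.add
    · exact (continuous_fst.comp hγC).mul Real.continuous_cos
    · exact (continuous_snd.comp hγC).mul Real.continuous_sin
  -- lower bound for μ
  have hbdd : BddBelow (Set.range μ) := ⟨0, by rintro x ⟨t, rfl⟩; exact (hμpos t).le⟩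
  have hμ0le : ∀ θ, μ0 ≤ μ θ := fun θ => hμ0 ▸ csInf_le hbdd ⟨θ, rfl⟩
  -- periodicity of deriv a etc.
  have ha'per : ∀ θ, deriv a (θ + 2 * π) = deriv a θ := by
    intro θ
    rw [← deriv_comp_add_const a (2 * π) θ, funext fun x => haper x]
  have ha'sym : ∀ θ, deriv a (θ + π) = deriv a θ := by
    intro θ
    rw [← deriv_comp_add_const a π θ, funext fun x => hasym x]
  have ha''per : ∀ θ, deriv (deriv a) (θ + 2 * π) = deriv (deriv a) θ := by
    intro θ
    rw [← deriv_comp_add_const (deriv a) (2 * π) θ, funext fun x => ha'per x]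
  have ha''sym : ∀ θ, deriv (deriv a) (θ + π) = deriv (deriv a) θ := by
    intro θ
    rw [← deriv_comp_add_const (deriv a) π θ, funext fun x => ha'sym x]
  have hpper : ∀ θ, p (θ + 2 * π) = p θ := by
    intro θ
    rw [hp, hp, haper, ha'per, er_add_two_pi, eth_add_two_pi]
  have hpsym : ∀ θ, p (θ + π) = -p θ := by
    intro θ
    rw [hp, hp, hasym, ha'sym, er_add_pi, eth_add_pi]
    simp only [smul_neg]
    abel
  -- periodicity of μ
  have hdγper : ∀ θ, deriv γ (θ + 2 * π) = deriv γ θ := by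
    intro θ
    rw [← deriv_comp_add_const γ (2 * π) θ, funext fun x => hγper x]
  have hdγsym : ∀ θ, deriv γ (θ + π) = -deriv γ θ := by
    intro θ
    rw [← deriv_comp_add_const γ π θ, funext fun x => hγsym x, deriv.fun_neg]
  have hμkey : ∀ θ v, (v * (a θ + deriv (deriv a) θ)) • eth θ = 0 → v = 0 := by
    intro θ v hv
    have := eq_zero_of_smul_eth hv
    rcases mul_eq_zero.mp this with h | h
    · exact h
    · exact absurd h (hconv θ).ne'
  have hμper : Function.Periodic μ (2 * π) := by
    intro θ
    have e1 := hdγper θ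
    rw [hdγ θ, hdγ (θ + 2 * π), haper θ, ha''per θ, eth_add_two_pi θ] at e1
    have : ((μ (θ + 2 * π) - μ θ) * (a θ + deriv (deriv a) θ)) • eth θ = 0 := by
      rw [sub_mul, sub_smul, e1, sub_self]
    have := hμkey θ _ this
    linarith [this]
  have hμsym : ∀ θ, μ (θ + π) = μ θ := by
    intro θ
    have e1 := hdγsym θ
    rw [hdγ θ, hdγ (θ + π), hasym θ, ha''sym θ, eth_add_pi θ, smul_neg, neg_inj] at e1
    have : ((μ (θ + π) - μ θ) * (a θ + deriv (deriv a) θ)) • eth θ = 0 := by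
      rw [sub_mul, sub_smul, e1, sub_self]
    have := hμkey θ _ this
    linarith [this]
  -- positivity of μ0
  have hμ0pos : 0 < μ0 := by
    have himg : Set.range μ = μ '' Icc 0 (0 + 2 * π) := (hμper.image_Icc two_pi_pos 0).symm
    have hcmp : IsCompact (μ '' Icc 0 (0 + 2 * π)) := isCompact_Icc.image hμcont
    have hne : (μ '' Icc 0 (0 + 2 * π)).Nonempty :=
      ⟨μ 0, 0, ⟨le_refl 0, by linarith⟩, rfl⟩
    have : sInf (μ '' Icc 0 (0 + 2 * π)) ∈ μ '' Icc 0 (0 + 2 * π) := hcmp.sInf_mem hne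
    obtain ⟨t, _, ht⟩ := this
    rw [hμ0, himg, ← ht]
    exact hμpos t
  -- the integral identity : 2 * w φ = ∫ (μ-μ0)(a+a'') sin(θ-φ)
  have key : ∀ φ, 2 * (g φ - μ0 * a φ) =
      ∫ θ in φ..(φ + π), (μ θ - μ0) * (a θ + deriv (deriv a) θ) * Real.sin (θ - φ) := by
    intro φ
    set W : ℝ → ℝ := fun θ => (dotp (γ θ) (eth θ) - μ0 * deriv a θ) * Real.sin (θ - φ) -
        (g θ - μ0 * a θ) * Real.cos (θ - φ) with hWdef
    have hsinD : ∀ θ : ℝ, HasDerivAt (fun t => Real.sin (t - φ)) (Real.cos (θ - φ)) θ := by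
      intro θ
      simpa [Function.comp_def] using (Real.hasDerivAt_sin (θ - φ)).comp θ ((hasDerivAt_id θ).sub_const φ)
    have hcosD : ∀ θ : ℝ, HasDerivAt (fun t => Real.cos (t - φ)) (-Real.sin (θ - φ)) θ := by
      intro θ
      simpa [Function.comp_def] using (Real.hasDerivAt_cos (θ - φ)).comp θ ((hasDerivAt_id θ).sub_const φ)
    have hWD : ∀ θ, HasDerivAt W
        ((μ θ - μ0) * (a θ + deriv (deriv a) θ) * Real.sin (θ - φ)) θ := by
      intro θ
      have h1 : HasDerivAt (fun t => dotp (γ t) (eth t) - μ0 * deriv a t)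
          (μ θ * (a θ + deriv (deriv a) θ) - g θ - μ0 * deriv (deriv a) θ) θ :=
        (hhD θ).sub ((ha'D θ).hasDerivAt.const_mul μ0)
      have h2 : HasDerivAt (fun t => g t - μ0 * a t)
          (dotp (γ θ) (eth θ) - μ0 * deriv a θ) θ :=
        (hgD θ).sub ((haD θ).hasDerivAt.const_mul μ0)
      have h3 := (h1.mul (hsinD θ)).sub (h2.mul (hcosD θ))
      refine h3.congr_deriv ?_
      ring
    have hGC : Continuous (fun θ => (μ θ - μ0) * (a θ + deriv (deriv a) θ) * Real.sin (θ - φ)) := by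
      apply Continuous.mul
      · exact (hμcont.sub continuous_const).mul (haC.add ha''C)
      · exact Real.continuous_sin.comp (continuous_id.sub continuous_const)
    have hint := intervalIntegral.integral_eq_sub_of_hasDerivAt
      (f := W) (fun θ _ => hWD θ) (hGC.intervalIntegrable φ (φ + π))
    rw [hint]
    have e1 : W (φ + π) = g φ - μ0 * a φ := by
      have hγs : γ (φ + π) = -γ φ := hγsym φ
      simp only [hWdef, hgdef]
      rw [show φ + π - φ = π by ring, Real.sin_pi, Real.cos_pi, hγs, er_add_pi, hasym]
      simp only [dotp, Prod.fst_neg, Prod.snd_neg, mul_zero, zero_sub, mul_neg, mul_one,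
        neg_neg, neg_mul]
      try ring
    have e2 : W φ = -(g φ - μ0 * a φ) := by
      simp only [hWdef, hgdef]
      rw [sub_self, Real.sin_zero, Real.cos_zero]
      ring
    rw [e1, e2]
    ring
  -- nonnegativity of w
  have wnonneg : ∀ φ, 0 ≤ g φ - μ0 * a φ := by
    intro φ
    have h1 : 0 ≤ ∫ θ in φ..(φ + π), (μ θ - μ0) * (a θ + deriv (deriv a) θ) * Real.sin (θ - φ) := by
      apply intervalIntegral.integral_nonneg (by linarith [pi_pos])
      intro u hu
      have h2 : 0 ≤ Real.sin (u - φ) :=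
        Real.sin_nonneg_of_nonneg_of_le_pi (by linarith [hu.1]) (by linarith [hu.2])
      have h3 : 0 ≤ μ u - μ0 := by linarith [hμ0le u]
      exact mul_nonneg (mul_nonneg h3 (hconv u).le) h2
    nlinarith [key φ]
  have gpos : ∀ θ, 0 < g θ := by
    intro θ
    nlinarith [wnonneg θ, mul_pos hμ0pos (hapos θ)]
  -- support bound for p
  have hsupp : ∀ ψ t, dotp (p t) (er ψ) ≤ a ψ := by
    intro ψ
    set F : ℝ → ℝ := fun t => dotp (p t) (er ψ) with hFdef
    have hFD : ∀ t, HasDerivAt F ((a t + deriv (deriv a) t) * Real.sin (ψ - t)) t :=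
      fun t => hasDerivAt_F p _ ψ t (hpD t)
    have hFdiff : Differentiable ℝ F := fun t => (hFD t).differentiableAt
    have hFC : Continuous F := hFdiff.continuous
    have hFper : Function.Periodic F (2 * π) := by
      intro t; simp only [hFdef]; rw [hpper t]
    have hFψ : F ψ = a ψ := by
      simp only [hFdef]
      rw [hp ψ]
      simp only [dotp, er, eth, Prod.smul_mk, smul_eq_mul, Prod.mk_add_mk, Prod.fst, Prod.snd]
      linear_combination (a ψ) * Real.sin_sq_add_cos_sq ψ
    have hmono : MonotoneOn F (Icc (ψ - π) ψ) := by
      apply monotoneOn_of_deriv_nonneg (convex_Icc _ _) hFC.continuousOn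
        (fun t _ => (hFD t).differentiableAt.differentiableWithinAt)
      intro t ht
      rw [interior_Icc] at ht
      rw [(hFD t).deriv]
      exact mul_nonneg (hconv t).le
        (Real.sin_nonneg_of_nonneg_of_le_pi (by linarith [ht.2]) (by linarith [ht.1]))
    have hanti : AntitoneOn F (Icc ψ (ψ + π)) := by
      apply antitoneOn_of_deriv_nonpos (convex_Icc _ _) hFC.continuousOn
        (fun t _ => (hFD t).differentiableAt.differentiableWithinAt)
      intro t ht
      rw [interior_Icc] at ht
      rw [(hFD t).deriv]
      apply mul_nonpos_of_nonneg_of_nonpos (hconv t).le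
      rw [show ψ - t = -(t - ψ) by ring, Real.sin_neg, neg_nonpos]
      exact Real.sin_nonneg_of_nonneg_of_le_pi (by linarith [ht.1]) (by linarith [ht.2])
    intro t
    obtain ⟨y, hy, hFy⟩ := hFper.exists_mem_Ico two_pi_pos t (ψ - π)
    rw [show dotp (p t) (er ψ) = F t from rfl, hFy]
    rcases le_total y ψ with hc | hc
    · have := hmono ⟨hy.1, hc⟩ ⟨by linarith [pi_pos], le_refl ψ⟩ hc
      rwa [hFψ] at this
    · have := hanti ⟨le_refl ψ, by linarith [pi_pos]⟩ ⟨hc, by linarith [hy.2]⟩ hc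
      rwa [hFψ] at this
  -- membership criterion for K
  have h0K : (0 : ℝ × ℝ) ∈ K := by
    rw [hK]
    have h1 : γ 0 ∈ convexHull ℝ (Set.range γ) := subset_convexHull ℝ _ ⟨0, rfl⟩
    have h2 : γ (0 + π) ∈ convexHull ℝ (Set.range γ) := subset_convexHull ℝ _ ⟨0 + π, rfl⟩
    rw [hγsym 0] at h2
    have h3 := (convex_convexHull ℝ (Set.range γ)) h1 h2
      (by norm_num : (0:ℝ) ≤ 1/2) (by norm_num : (0:ℝ) ≤ 1/2) (by norm_num)
    rwa [smul_neg, add_neg_cancel] at h3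
  have memK : ∀ x : ℝ × ℝ, (∀ ψ, dotp x (er ψ) ≤ g ψ) → x ∈ K := by
    intro x hx
    by_cases hx0 : x = 0
    · rw [hx0]; exact h0K
    · -- find θ₀ with γ θ₀ parallel to x
      have hf0C : Continuous (fun θ => det2 (γ θ) x) := by
        apply Continuous.sub
        · exact (continuous_fst.comp hγC).mul continuous_const
        · exact (continuous_snd.comp hγC).mul continuous_const
      have hfπ : det2 (γ π) x = -det2 (γ 0) x := by
        have : γ π = -γ 0 := by rw [← zero_add π, hγsym 0]
        rw [this]
        simp only [det2, Prod.fst_neg, Prod.snd_neg]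
        ring
      have : ∃ θ₀ ∈ Icc (0:ℝ) π, det2 (γ θ₀) x = 0 := by
        rcases le_total (det2 (γ 0) x) 0 with hc | hc
        · have h1 : (0:ℝ) ∈ Icc (det2 (γ 0) x) (det2 (γ π) x) := ⟨hc, by rw [hfπ]; linarith⟩
          obtain ⟨θ₀, hθ₀, he⟩ := intermediate_value_Icc pi_pos.le hf0C.continuousOn h1
          exact ⟨θ₀, hθ₀, he⟩
        · have h1 : (0:ℝ) ∈ Icc (det2 (γ π) x) (det2 (γ 0) x) := ⟨by rw [hfπ]; linarith, hc⟩
          obtain ⟨θ₀, hθ₀, he⟩ := intermediate_value_Icc' pi_pos.le hf0C.continuousOn h1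
          exact ⟨θ₀, hθ₀, he⟩
      obtain ⟨θ₀, _, hdet0⟩ := this
      have hxx : 0 < dotp x x := by
        have h : x.1 ≠ 0 ∨ x.2 ≠ 0 := by
          by_contra h
          push_neg at h
          exact hx0 (Prod.ext h.1 h.2)
        have he : dotp x x = x.1 ^ 2 + x.2 ^ 2 := by simp only [dotp]; ring
        rw [he]
        rcases h with h | h
        · positivity
        · positivity
      have hpar : γ θ₀ = (dotp (γ θ₀) x / dotp x x) • x := by
        have hd : (γ θ₀).1 * x.2 - (γ θ₀).2 * x.1 = 0 := hdet0
        apply Prod.ext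
        · show (γ θ₀).1 = (dotp (γ θ₀) x / dotp x x) * x.1
          field_simp
          simp only [dotp]
          linear_combination x.2 * hd
        · show (γ θ₀).2 = (dotp (γ θ₀) x / dotp x x) * x.2
          field_simp
          simp only [dotp]
          linear_combination (-x.1) * hd
      set t0 : ℝ := dotp (γ θ₀) x / dotp x x with ht0def
      have ht0ne : t0 ≠ 0 := by
        intro h
        rw [h, zero_smul] at hpar
        have : g θ₀ = 0 := by simp only [hgdef]; rw [hpar]; simp [dotp]
        exact (gpos θ₀).ne' this
      have hstar : ∃ θs : ℝ, ∃ ts : ℝ, 0 < ts ∧ γ θs = ts • x := by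
        rcases lt_or_gt_of_ne ht0ne with hneg | hposi
        · refine ⟨θ₀ + π, -t0, by linarith, ?_⟩
          rw [hγsym θ₀, hpar, neg_smul]
        · exact ⟨θ₀, t0, hposi, hpar⟩
      obtain ⟨θs, ts, hts, hpar'⟩ := hstar
      have hgts : g θs = ts * dotp x (er θs) := by
        simp only [hgdef]; rw [hpar', dotp_smul]
      have hcpos : 0 < dotp x (er θs) := by
        by_contra hle
        push_neg at hle
        nlinarith [gpos θs, hgts, hts]
      have hts1 : 1 ≤ ts := by
        have h1 := hx θs
        rw [hgts] at h1
        nlinarith [hcpos]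
      have hxval : x = ts⁻¹ • γ θs + (1 - ts⁻¹) • (0 : ℝ × ℝ) := by
        rw [hpar', smul_smul, inv_mul_cancel₀ hts.ne', one_smul, smul_zero, add_zero]
      rw [hK] at h0K ⊢
      rw [hxval]
      exact (convex_convexHull ℝ (Set.range γ))
        (subset_convexHull ℝ _ ⟨θs, rfl⟩) h0K
        (by positivity) (by
          have : ts⁻¹ ≤ 1 := by
            rw [inv_le_one_iff₀]; right; exact hts1
          linarith) (by ring)
  -- membership in the inradius candidate set
  set S : Set ℝ := {r : ℝ | 0 ≤ r ∧ ∃ x : ℝ × ℝ, (fun y => x + r • y) '' PB ⊆ K} with hSdef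
  have hSmem : ∀ s : ℝ, 0 ≤ s → (∀ θ, s * a θ ≤ g θ) → s ∈ S := by
    intro s hs hsa
    refine ⟨hs, 0, ?_⟩
    rintro z ⟨y, hy, rfl⟩
    show 0 + s • y ∈ K
    rw [zero_add]
    have hTconv : Convex ℝ {y : ℝ × ℝ | s • y ∈ K} := by
      intro y1 h1 y2 h2 c1 c2 hc1 hc2 hc12
      show s • (c1 • y1 + c2 • y2) ∈ K
      rw [smul_add, smul_comm s c1, smul_comm s c2]
      exact (hK ▸ convex_convexHull ℝ (Set.range γ)) h1 h2 hc1 hc2 hc12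
    have hrange : Set.range p ⊆ {y : ℝ × ℝ | s • y ∈ K} := by
      rintro z ⟨φ, rfl⟩
      show s • p φ ∈ K
      apply memK
      intro ψ
      rw [dotp_smul]
      calc s * dotp (p φ) (er ψ) ≤ s * a ψ := mul_le_mul_of_nonneg_left (hsupp ψ φ) hs
        _ ≤ g ψ := hsa ψ
    have := convexHull_min hrange hTconv
    rw [← hPB] at this
    exact this hy
  -- boundedness of S
  have hp0ne : p 0 ≠ 0 := by
    intro h
    have : (p 0).1 = a 0 := by rw [hp 0]; simp [er, eth]
    rw [h] at this
    exact (hapos 0).ne (by simpa using this)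
  have hSbdd : BddAbove S := by
    have hrγ : Set.range γ = γ '' Icc 0 (0 + 2 * π) := (hγper.image_Icc two_pi_pos 0).symm
    have hbK : Bornology.IsBounded K := by
      rw [hK]
      rw [isBounded_convexHull]
      rw [hrγ]
      exact (isCompact_Icc.image hγC).isBounded
    obtain ⟨R, hR⟩ := hbK.subset_closedBall 0
    refine ⟨R / ‖p 0‖, ?_⟩
    rintro r ⟨hr0, x, hxr⟩
    have h1 : x + r • p 0 ∈ K := hxr ⟨p 0, hPB ▸ subset_convexHull ℝ _ ⟨0, rfl⟩, rfl⟩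
    have h2 : x + r • p π ∈ K := hxr ⟨p π, hPB ▸ subset_convexHull ℝ _ ⟨π, rfl⟩, rfl⟩
    have hpπ : p π = -p 0 := by rw [← zero_add π, hpsym 0]
    have hn1 : ‖x + r • p 0‖ ≤ R := mem_closedBall_zero_iff.mp (hR h1)
    have hn2 : ‖x + r • p π‖ ≤ R := mem_closedBall_zero_iff.mp (hR h2)
    have hdiff : (x + r • p 0) - (x + r • p π) = (2 * r) • p 0 := by
      rw [hpπ, smul_neg]
      rw [two_mul, add_smul]
      abel
    have hnd : ‖(x + r • p 0) - (x + r • p π)‖ ≤ 2 * R :=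
      le_trans (norm_sub_le _ _) (by linarith)
    rw [hdiff, norm_smul] at hnd
    have hpn : 0 < ‖p 0‖ := norm_pos_iff.mpr hp0ne
    rw [le_div_iff₀ hpn]
    have : |2 * r| = 2 * r := abs_of_nonneg (by linarith)
    rw [Real.norm_eq_abs, this] at hnd
    linarith
  -- part 1
  have part1 : μ0 ≤ rin := by
    rw [hrin]
    apply le_csSup hSbdd
    apply hSmem μ0 hμ0pos.le
    intro θ
    linarith [wnonneg θ]
  refine ⟨part1, ?_⟩
  -- part 2
  intro heq
  by_cases hconst : ∀ θ, μ θ = μ0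
  · refine ⟨γ 0 - μ0 • p 0, μ0, hμ0pos, fun θ => ?_⟩
    have hFD : ∀ t, HasDerivAt (fun t => γ t - μ0 • p t) 0 t := by
      intro t
      have h1 : HasDerivAt (fun t => γ t - μ0 • p t)
          ((μ t * (a t + deriv (deriv a) t)) • eth t - μ0 • ((a t + deriv (deriv a) t) • eth t)) t :=
        (hγDir t).sub ((hpD t).const_smul μ0)
      have h2 : (μ t * (a t + deriv (deriv a) t)) • eth t
          - μ0 • ((a t + deriv (deriv a) t) • eth t) = 0 := by
        rw [smul_smul, hconst t, sub_self]
      rwa [h2] at h1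
    have hcst := is_const_of_deriv_eq_zero (fun t => (hFD t).differentiableAt)
      (fun t => (hFD t).deriv) θ 0
    rw [← hcst]
    abel
  · exfalso
    push_neg at hconst
    obtain ⟨θ₁, hθ₁⟩ := hconst
    have hθ₁lt : μ0 < μ θ₁ := lt_of_le_of_ne (hμ0le θ₁) (Ne.symm hθ₁)
    -- strict positivity of w
    have wpos : ∀ φ, 0 < g φ - μ0 * a φ := by
      intro φ
      have hμperπ : Function.Periodic μ π := hμsym
      obtain ⟨t₀, ht₀, hμt₀⟩ := hμperπ.exists_mem_Ico pi_pos θ₁ φ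
      have ht₀U : μ0 < μ t₀ := hμt₀ ▸ hθ₁lt
      have hUopen : IsOpen {θ : ℝ | μ0 < μ θ} := isOpen_lt continuous_const hμcont
      obtain ⟨δ, hδ, hball⟩ := Metric.isOpen_iff.mp hUopen t₀ ht₀U
      set c := t₀ + min (δ / 2) ((φ + π - t₀) / 2) with hcdef
      have hmin1 : 0 < min (δ / 2) ((φ + π - t₀) / 2) := by
        apply lt_min (by linarith)
        have := ht₀.2
        linarith
      have hcU : μ0 < μ c := by
        apply hball
        rw [Metric.mem_ball, Real.dist_eq, hcdef]
        rw [show t₀ + min (δ / 2) ((φ + π - t₀) / 2) - t₀ = min (δ / 2) ((φ + π - t₀) / 2) by ring]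
        rw [abs_of_nonneg hmin1.le]
        calc min (δ / 2) ((φ + π - t₀) / 2) ≤ δ / 2 := min_le_left _ _
          _ < δ := by linarith
      have hcIoo : c ∈ Ioo φ (φ + π) := by
        constructor
        · have := ht₀.1; rw [hcdef]; linarith
        · rw [hcdef]
          have h2 : min (δ / 2) ((φ + π - t₀) / 2) ≤ (φ + π - t₀) / 2 := min_le_right _ _
          have := ht₀.2
          linarith
      have hGC : Continuous (fun θ => (μ θ - μ0) * (a θ + deriv (deriv a) θ) * Real.sin (θ - φ)) := by
        apply Continuous.mul
        · exact (hμcont.sub continuous_const).mul (haC.add ha''C)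
        · exact Real.continuous_sin.comp (continuous_id.sub continuous_const)
      have hlt : (0:ℝ) < ∫ θ in φ..(φ + π), (μ θ - μ0) * (a θ + deriv (deriv a) θ) * Real.sin (θ - φ) := by
        have h0 := intervalIntegral.integral_lt_integral_of_continuousOn_of_le_of_exists_lt
          (f := fun _ => (0:ℝ))
          (g := fun θ => (μ θ - μ0) * (a θ + deriv (deriv a) θ) * Real.sin (θ - φ))
          (by linarith [pi_pos]) continuousOn_const hGC.continuousOn
          (fun u hu => by
            have h2 : 0 ≤ Real.sin (u - φ) :=
              Real.sin_nonneg_of_nonneg_of_le_pi (by linarith [hu.1]) (by linarith [hu.2])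
            have h3 : 0 ≤ μ u - μ0 := by linarith [hμ0le u]
            exact mul_nonneg (mul_nonneg h3 (hconv u).le) h2)
          ⟨c, ⟨hcIoo.1.le, hcIoo.2.le⟩, by
            apply mul_pos (mul_pos (by linarith) (hconv c))
            exact Real.sin_pos_of_pos_of_lt_pi (by linarith [hcIoo.1]) (by linarith [hcIoo.2])⟩
        rwa [intervalIntegral.integral_zero] at h0
      nlinarith [key φ]
    -- uniform bound
    have hwC : Continuous (fun θ => g θ - μ0 * a θ) :=
      hgC.sub (continuous_const.mul haC)
    obtain ⟨θm, hθm, hmin⟩ := isCompact_Icc.exists_isMinOn (α := ℝ)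
      (Set.nonempty_Icc.mpr (by linarith : (0:ℝ) ≤ 0 + 2 * π)) hwC.continuousOn
    set δ₀ := g θm - μ0 * a θm with hδ₀def
    have hδ₀pos : 0 < δ₀ := wpos θm
    have hwper : Function.Periodic (fun θ => g θ - μ0 * a θ) (2 * π) := by
      intro θ
      simp only [hgdef]
      rw [hγper θ, er_add_two_pi, haper θ]
    have hwlb : ∀ θ, δ₀ ≤ g θ - μ0 * a θ := by
      intro θ
      obtain ⟨y, hy, hwy⟩ := hwper.exists_mem_Ico two_pi_pos θ 0
      have h2 : g θ - μ0 * a θ = g y - μ0 * a y := hwy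
      have h1 : g θm - μ0 * a θm ≤ g y - μ0 * a y := hmin ⟨hy.1, hy.2.le⟩
      rw [h2, hδ₀def]
      exact h1
    obtain ⟨θA, hθA, hmax⟩ := isCompact_Icc.exists_isMaxOn (α := ℝ)
      (Set.nonempty_Icc.mpr (by linarith : (0:ℝ) ≤ 0 + 2 * π)) haC.continuousOn
    set A := a θA with hAdef
    have hApos : 0 < A := hapos θA
    have haub : ∀ θ, a θ ≤ A := by
      intro θ
      obtain ⟨y, hy, hay⟩ := haper.exists_mem_Ico two_pi_pos θ 0
      rw [hay, hAdef]
      exact hmax ⟨hy.1, hy.2.le⟩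
    set ε := δ₀ / A with hεdef
    have hεpos : 0 < ε := div_pos hδ₀pos hApos
    have hsa : ∀ θ, (μ0 + ε) * a θ ≤ g θ := by
      intro θ
      have h1 : ε * a θ ≤ ε * A := mul_le_mul_of_nonneg_left (haub θ) hεpos.le
      have h2 : ε * A = δ₀ := by rw [hεdef]; field_simp
      nlinarith [hwlb θ]
    have hmem : μ0 + ε ∈ S := hSmem (μ0 + ε) (by linarith) hsa
    have : μ0 + ε ≤ rin := hrin ▸ le_csSup hSbdd hmem
    linarith [heq ▸ this]

end
end

section
/- Under the Minkowski curvature flow ∂F/∂u = v·q(θ), ∂F/∂t = −k·p(θ), the speed v satisfies ∂v/∂t = −k² v, and the tangent angle satisfies ∂θ/∂t = (1/[q,q']) ∂k/∂s. -/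
open Real Set MeasureTheory

noncomputable section

lemma hasDerivAt_er (θ : ℝ) : HasDerivAt er (eth θ) θ :=
  (Real.hasDerivAt_cos θ).prodMk (Real.hasDerivAt_sin θ)

lemma hasDerivAt_eth (θ : ℝ) : HasDerivAt eth (-er θ) θ := by
  have := ((Real.hasDerivAt_sin θ).neg).prodMk (Real.hasDerivAt_cos θ)
  exact this.congr_deriv (by simp [er, Prod.ext_iff])

lemma basis_ext {θ α β γ δ : ℝ} (h : α • er θ + β • eth θ = γ • er θ + δ • eth θ) :
    α = γ ∧ β = δ := by
  have h1 := congrArg Prod.fst h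
  have h2 := congrArg Prod.snd h
  simp [er, eth] at h1 h2
  constructor
  · linear_combination Real.cos θ * h1 + Real.sin θ * h2 - (α - γ) * Real.sin_sq_add_cos_sq θ
  · linear_combination (-Real.sin θ) * h1 + Real.cos θ * h2 - (β - δ) * Real.sin_sq_add_cos_sq θ

section helpers

variable {E : Type*} [NormedAddCommGroup E] [NormedSpace ℝ E]

lemma hasDerivAt_right (h : ℝ → ℝ → E) (hh : ContDiff ℝ (⊤ : ℕ∞) (Function.uncurry h)) (u t : ℝ) :
    HasDerivAt (fun t' => h u t')
      (fderiv ℝ (Function.uncurry h) (u, t) (0, 1)) t :=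
  (hh.differentiable (by simp) (u, t)).hasFDerivAt.comp_hasDerivAt t
    ((hasDerivAt_const t u).prodMk (hasDerivAt_id t))

lemma hasDerivAt_left (h : ℝ → ℝ → E) (hh : ContDiff ℝ (⊤ : ℕ∞) (Function.uncurry h)) (u t : ℝ) :
    HasDerivAt (fun u' => h u' t)
      (fderiv ℝ (Function.uncurry h) (u, t) (1, 0)) u :=
  ((hh.differentiable (by simp) (u, t)).hasFDerivAt.comp_hasDerivAt u
    ((hasDerivAt_id' u).prodMk (hasDerivAt_const u t)) :
      HasDerivAt (Function.uncurry h ∘ fun x => (x, t)) _ u)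

lemma mixed_partials (G : ℝ → ℝ → E) (hG : ContDiff ℝ (⊤ : ℕ∞) (Function.uncurry G)) (u t : ℝ) :
    deriv (fun t' => deriv (fun u' => G u' t') u) t
      = deriv (fun u' => deriv (fun t' => G u' t') t) u := by
  set g := Function.uncurry G with hg
  have hd : Differentiable ℝ g := hG.differentiable (by simp)
  have hf' : ContDiff ℝ (⊤ : ℕ∞) (fderiv ℝ g) := hG.fderiv_right (by simp)
  have hsymm := second_derivative_symmetric (f := g) (f' := fderiv ℝ g)
    (f'' := fderiv ℝ (fderiv ℝ g) (u, t))
    (fun y => (hd y).hasFDerivAt) ((hf'.differentiable (by simp) (u, t)).hasFDerivAt)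
  have h1 : (fun t' => deriv (fun u' => G u' t') u) = fun t' => fderiv ℝ g (u, t') (1, 0) := by
    funext t'; exact (hasDerivAt_left G hG u t').deriv
  have h2 : (fun u' => deriv (fun t' => G u' t') t) = fun u' => fderiv ℝ g (u', t) (0, 1) := by
    funext u'; exact (hasDerivAt_right G hG u' t).deriv
  rw [h1, h2]
  have hB : HasDerivAt (fun t' => fderiv ℝ g (u, t'))
      (fderiv ℝ (fderiv ℝ g) (u, t) (0, 1)) t :=
    (hf'.differentiable (by simp) (u, t)).hasFDerivAt.comp_hasDerivAt t
      ((hasDerivAt_const t u).prodMk (hasDerivAt_id t))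
  have hB' : HasDerivAt (fun u' => fderiv ℝ g (u', t))
      (fderiv ℝ (fderiv ℝ g) (u, t) (1, 0)) u :=
    (hf'.differentiable (by simp) (u, t)).hasFDerivAt.comp_hasDerivAt u
      ((hasDerivAt_id u).prodMk (hasDerivAt_const u t))
  have hL : HasDerivAt (fun t' => fderiv ℝ g (u, t') (1, 0))
      (fderiv ℝ (fderiv ℝ g) (u, t) (0, 1) (1, 0)) t := by
    simpa using hB.clm_apply (hasDerivAt_const t ((1 : ℝ), (0 : ℝ)))
  have hR : HasDerivAt (fun u' => fderiv ℝ g (u', t) (0, 1))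
      (fderiv ℝ (fderiv ℝ g) (u, t) (1, 0) (0, 1)) u := by
    simpa using hB'.clm_apply (hasDerivAt_const u ((0 : ℝ), (1 : ℝ)))
  rw [hL.deriv, hR.deriv, hsymm]

end helpers

/-- Evolution of the speed and of the tangent angle under the Minkowski
curvature flow. -/
theorem stmt13 (a : ℝ → ℝ) (ha : ContDiff ℝ (⊤ : ℕ∞) a) (haper : Function.Periodic a (2 * π))
    (hapos : ∀ θ, 0 < a θ) (hconv : ∀ θ, 0 < a θ + deriv (deriv a) θ)
    (p : ℝ → ℝ × ℝ) (hp : ∀ θ, p θ = a θ • er θ + deriv a θ • eth θ)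
    (q : ℝ → ℝ × ℝ) (hq : ∀ θ, q θ = (det2 (p θ) (deriv p θ))⁻¹ • deriv p θ)
    (F : ℝ → ℝ → ℝ × ℝ) (θf v k : ℝ → ℝ → ℝ)
    (hF : ContDiff ℝ (⊤ : ℕ∞) (Function.uncurry F)) (hθf : ContDiff ℝ (⊤ : ℕ∞) (Function.uncurry θf))
    (hv : ContDiff ℝ (⊤ : ℕ∞) (Function.uncurry v)) (hk : ContDiff ℝ (⊤ : ℕ∞) (Function.uncurry k))
    (hvpos : ∀ u t, 0 < v u t)
    (heq1 : ∀ u t, deriv (fun u' => F u' t) u = v u t • q (θf u t))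
    (heq2 : ∀ u t, deriv (fun t' => F u t') t = -(k u t) • p (θf u t))
    (hcurv : ∀ u t, k u t =
      det2 (p (θf u t)) (deriv p (θf u t)) * deriv (fun u' => θf u' t) u / v u t)
    (u t : ℝ) :
    deriv (fun t' => v u t') t = -(k u t) ^ 2 * v u t ∧
      deriv (fun t' => θf u t') t =
        (1 / (v u t * det2 (q (θf u t)) (deriv q (θf u t)))) * deriv (fun u' => k u' t) u := by
  -- smoothness of derivatives of a
  have ha0 : ContDiff ℝ ((⊤ : ℕ∞) : WithTop ℕ∞) a := ha.of_le (by simp)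
  have ha1 : ContDiff ℝ ((⊤ : ℕ∞) : WithTop ℕ∞) (deriv a) := (contDiff_infty_iff_deriv.mp ha0).2
  have hp_fun : p = fun θ => a θ • er θ + deriv a θ • eth θ := funext hp
  have hder_p : ∀ θ, HasDerivAt p ((a θ + deriv (deriv a) θ) • eth θ) θ := by
    intro θ
    rw [hp_fun]
    have h1 := ((ha.differentiable (by simp) θ).hasDerivAt).smul (hasDerivAt_er θ)
    have h2 := ((ha1.differentiable (by simp) θ).hasDerivAt).smul
      (hasDerivAt_eth θ)
    apply (h1.add h2).congr_deriv
    simp [er, eth, Prod.ext_iff]; constructor <;> ring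
  have hJ : ∀ θ, det2 (p θ) (deriv p θ) = a θ * (a θ + deriv (deriv a) θ) := by
    intro θ
    rw [(hder_p θ).deriv, hp θ]
    simp [det2, er, eth]
    linear_combination (a θ * (a θ + deriv (deriv a) θ)) * Real.sin_sq_add_cos_sq θ
  have hq_fun : ∀ θ, q θ = (a θ)⁻¹ • eth θ := by
    intro θ
    rw [hq θ, hJ θ, (hder_p θ).deriv, smul_smul]
    congr 1
    have h1 := (hconv θ).ne'
    have h2 := (hapos θ).ne'
    field_simp
  have hder_q : ∀ θ, HasDerivAt q (-((a θ) ^ 2)⁻¹ • p θ) θ := by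
    intro θ
    rw [funext hq_fun]
    have h1 := ((ha.differentiable (by simp) θ).hasDerivAt).inv (hapos θ).ne'
    apply (h1.smul (hasDerivAt_eth θ)).congr_deriv
    have hA := (hapos θ).ne'
    rw [hp θ]
    simp [er, eth, Prod.ext_iff]
    constructor <;> (field_simp; ring)
  have hdet_qq : ∀ θ, det2 (q θ) (deriv q θ) = ((a θ) ^ 2)⁻¹ := by
    intro θ
    rw [hq_fun θ, (hder_q θ).deriv, hp θ]
    have hA := (hapos θ).ne'
    simp [det2, er, eth]
    field_simp
    linear_combination (a θ) * Real.sin_sq_add_cos_sq θ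
  -- abbreviations
  set θ0 := θf u t with hθ0
  have hA : a θ0 ≠ 0 := (hapos θ0).ne'
  have hV : v u t ≠ 0 := (hvpos u t).ne'
  -- partial derivatives
  obtain ⟨vt, hvt⟩ : ∃ d, HasDerivAt (fun t' => v u t') d t := ⟨_, hasDerivAt_right v hv u t⟩
  obtain ⟨θt, hθt⟩ : ∃ d, HasDerivAt (fun t' => θf u t') d t := ⟨_, hasDerivAt_right θf hθf u t⟩
  obtain ⟨θu, hθu⟩ : ∃ d, HasDerivAt (fun u' => θf u' t) d u := ⟨_, hasDerivAt_left θf hθf u t⟩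
  obtain ⟨ku, hku⟩ : ∃ d, HasDerivAt (fun u' => k u' t) d u := ⟨_, hasDerivAt_left k hk u t⟩
  -- mixed partials
  have M := mixed_partials F hF u t
  -- left-hand side of the mixed partials identity
  have hLfun : (fun t' => deriv (fun u' => F u' t') u) = fun t' => v u t' • q (θf u t') :=
    funext fun t' => heq1 u t'
  have hqc : HasDerivAt (fun t' => q (θf u t')) (θt • (-((a θ0) ^ 2)⁻¹ • p θ0)) t := by
    have := (hder_q θ0).scomp_of_eq (x := t) (h := fun t' => θf u t') hθt hθ0
    exact this
  have hL : HasDerivAt (fun t' => v u t' • q (θf u t'))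
      (vt • q θ0 + v u t • (θt • (-((a θ0) ^ 2)⁻¹ • p θ0))) t :=
    (hvt.smul hqc).congr_deriv (by rw [add_comm])
  -- right-hand side
  have hRfun : (fun u' => deriv (fun t' => F u' t') t) = fun u' => -(k u' t) • p (θf u' t) :=
    funext fun u' => heq2 u' t
  have hpc : HasDerivAt (fun u' => p (θf u' t))
      (θu • ((a θ0 + deriv (deriv a) θ0) • eth θ0)) u := by
    have := (hder_p θ0).scomp_of_eq (x := u) (h := fun u' => θf u' t) hθu hθ0
    exact this
  have hR : HasDerivAt (fun u' => -(k u' t) • p (θf u' t))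
      ((-ku) • p θ0 + (-(k u t)) • (θu • ((a θ0 + deriv (deriv a) θ0) • eth θ0))) u :=
    (hku.neg.smul hpc).congr_deriv (by rw [add_comm]; rfl)
  rw [hLfun, hRfun, hL.deriv, hR.deriv] at M
  -- rewrite both sides in the (er, eth) basis
  have hLbasis : vt • q θ0 + v u t • (θt • (-((a θ0) ^ 2)⁻¹ • p θ0))
      = (-(v u t * θt * ((a θ0) ^ 2)⁻¹ * a θ0)) • er θ0
        + (vt * (a θ0)⁻¹ - v u t * θt * ((a θ0) ^ 2)⁻¹ * deriv a θ0) • eth θ0 := by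
    rw [hq_fun θ0, hp θ0]
    apply Prod.ext <;> (simp [er, eth]; ring)
  have hRbasis : (-ku) • p θ0 + (-(k u t)) • (θu • ((a θ0 + deriv (deriv a) θ0) • eth θ0))
      = (-(ku * a θ0)) • er θ0
        + (-(ku * deriv a θ0) - k u t * θu * (a θ0 + deriv (deriv a) θ0)) • eth θ0 := by
    rw [hp θ0]
    apply Prod.ext <;> (simp [er, eth]; ring)
  rw [hLbasis, hRbasis] at M
  obtain ⟨Eer, Eeth⟩ := basis_ext M
  -- the curvature relation
  have hcv : k u t * v u t = a θ0 * (a θ0 + deriv (deriv a) θ0) * θu := by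
    have := hcurv u t
    rw [hJ θ0, hθu.deriv] at this
    rw [this]; field_simp
  have hEer' : v u t * θt = ku * a θ0 ^ 2 := by
    have hI : a θ0 * (a θ0)⁻¹ = 1 := mul_inv_cancel₀ hA
    linear_combination (-(a θ0)) * Eer - (v u t * θt) * (1 + a θ0 * (a θ0)⁻¹) * hI
  constructor
  · rw [hvt.deriv]
    have hI : a θ0 * (a θ0)⁻¹ = 1 := mul_inv_cancel₀ hA
    linear_combination (a θ0) * Eeth + ((a θ0)⁻¹ ^ 2 * a θ0 * deriv a θ0) * hEer' + (k u t) * hcv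
      + (-vt + ku * deriv a θ0 * a θ0 * (a θ0 * (a θ0)⁻¹ + 1)) * hI
  · rw [hθt.deriv, hku.deriv, hdet_qq θ0]
    rw [one_div, mul_inv, inv_inv]
    have hI : v u t * (v u t)⁻¹ = 1 := mul_inv_cancel₀ hV
    linear_combination (v u t)⁻¹ * hEer' - θt * hI

end
end

section
/- Let k : [0, 2π] → ℝ be a C¹ positive 2π-periodic function and a the support function of the smooth symmetric strictly convex unit ball 𝒫 (with a + a'' > 0). Then k is the Minkowski curvature of a simple closed strictly convex C² plane curve parameterized by θ (with tangent direction q(θ)) if and only if ∫₀^{2π} ((a(θ)+a''(θ))/k(θ)) sin θ dθ = 0 and ∫₀^{2π} ((a(θ)+a''(θ))/k(θ)) cos θ dθ = 0. -/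
open Real Set MeasureTheory

noncomputable section

lemma periodic_deriv' {f : ℝ → ℝ} {T : ℝ} (hf : Function.Periodic f T) :
    Function.Periodic (deriv f) T := by
  intro x
  have : (fun y => f (y + T)) = f := funext fun y => hf y
  calc deriv f (x + T) = deriv (fun y => f (y + T)) x := (deriv_comp_add_const f T x).symm
    _ = deriv f x := by rw [this]

/-- A positive periodic function is the Minkowski curvature of a simple closed
strictly convex curve iff the two closing integrals vanish. -/
theorem stmt16 (a : ℝ → ℝ) (ha : ContDiff ℝ (⊤ : ℕ∞) a) (haper : Function.Periodic a (2 * π))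
    (hapos : ∀ θ, 0 < a θ) (hconv : ∀ θ, 0 < a θ + deriv (deriv a) θ)
    (p : ℝ → ℝ × ℝ) (hp : ∀ θ, p θ = a θ • er θ + deriv a θ • eth θ)
    (q : ℝ → ℝ × ℝ) (hq : ∀ θ, q θ = (det2 (p θ) (deriv p θ))⁻¹ • deriv p θ)
    (hasym : ∀ θ, a (θ + π) = a θ)
    (k : ℝ → ℝ) (hk1 : ContDiff ℝ 1 k) (hkpos : ∀ θ, 0 < k θ)
    (hkper : Function.Periodic k (2 * π)) :
    (∃ γ : ℝ → ℝ × ℝ, ContDiff ℝ 2 γ ∧ Function.Periodic γ (2 * π) ∧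
        Set.InjOn γ (Set.Ico 0 (2 * π)) ∧
        ∀ θ, deriv γ θ = ((a θ + deriv (deriv a) θ) / k θ) • eth θ) ↔
      ((∫ θ in (0:ℝ)..2 * π, (a θ + deriv (deriv a) θ) / k θ * Real.sin θ) = 0 ∧
        (∫ θ in (0:ℝ)..2 * π, (a θ + deriv (deriv a) θ) / k θ * Real.cos θ) = 0) := by
  clear hp hq hasym hapos
  set f : ℝ → ℝ := fun θ => (a θ + deriv (deriv a) θ) / k θ with hfdef
  have haInf : ContDiff ℝ (((⊤:ℕ∞)) : WithTop ℕ∞) a := ha.of_le (by simp)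
  have hd1 : ContDiff ℝ (((⊤:ℕ∞)) : WithTop ℕ∞) (deriv a) := (contDiff_infty_iff_deriv.mp haInf).2
  have hd2 : ContDiff ℝ (((⊤:ℕ∞)) : WithTop ℕ∞) (deriv (deriv a)) := (contDiff_infty_iff_deriv.mp hd1).2
  have hkne : ∀ θ, k θ ≠ 0 := fun θ => (hkpos θ).ne'
  have hf1 : ContDiff ℝ 1 f :=
    (((haInf.of_le (by norm_num)).add (hd2.of_le (by norm_num))).div hk1 hkne)
  have hfc : Continuous f := hf1.continuous
  have hfpos : ∀ θ, 0 < f θ := fun θ => div_pos (hconv θ) (hkpos θ)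
  have hfper : Function.Periodic f (2 * π) := by
    intro θ
    have h2 : Function.Periodic (deriv (deriv a)) (2 * π) :=
      periodic_deriv' (periodic_deriv' haper)
    simp only [hfdef, haper θ, h2 θ, hkper θ]
  have hgsc : Continuous (fun t => f t * Real.sin t) := hfc.mul Real.continuous_sin
  have hgcc : Continuous (fun t => f t * Real.cos t) := hfc.mul Real.continuous_cos
  constructor
  · -- forward
    rintro ⟨γ, hγ2, hγper, _, hγ'⟩
    have hγd : Differentiable ℝ γ := hγ2.differentiable (by norm_num)
    have hcomp2 : ∀ x, HasDerivAt (fun t => (γ t).2) (f x * Real.cos x) x := by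
      intro x
      have h := ((ContinuousLinearMap.snd ℝ ℝ ℝ).hasFDerivAt (x := γ x)).comp_hasDerivAt x
        (hγd x).hasDerivAt
      have : (deriv γ x).2 = f x * Real.cos x := by
        rw [hγ' x]; simp [eth, Prod.smul_def]; exact Or.inl rfl
      have h' : HasDerivAt (Prod.snd ∘ γ) (f x * Real.cos x) x := by simpa [this] using h
      exact h'
    have hcomp1 : ∀ x, HasDerivAt (fun t => (γ t).1) (-(f x * Real.sin x)) x := by
      intro x
      have h := ((ContinuousLinearMap.fst ℝ ℝ ℝ).hasFDerivAt (x := γ x)).comp_hasDerivAt x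
        (hγd x).hasDerivAt
      have : (deriv γ x).1 = -(f x * Real.sin x) := by
        rw [hγ' x]; simp [eth, Prod.smul_def]; exact Or.inl rfl
      have h' : HasDerivAt (Prod.fst ∘ γ) (-(f x * Real.sin x)) x := by simpa [this] using h
      exact h'
    have hper0 : γ (2 * π) = γ 0 := by simpa using hγper 0
    constructor
    · have hI := intervalIntegral.integral_eq_sub_of_hasDerivAt
        (f := fun t => (γ t).1) (f' := fun x => -(f x * Real.sin x)) (a := 0) (b := 2 * π)
        (fun x _ => hcomp1 x) (hgsc.neg.intervalIntegrable 0 (2 * π))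
      simp only [hper0, sub_self, intervalIntegral.integral_neg, neg_eq_zero] at hI
      exact hI
    · have hI := intervalIntegral.integral_eq_sub_of_hasDerivAt
        (f := fun t => (γ t).2) (f' := fun x => f x * Real.cos x) (a := 0) (b := 2 * π)
        (fun x _ => hcomp2 x) (hgcc.intervalIntegrable 0 (2 * π))
      simp only [hper0, sub_self] at hI
      exact hI
  · -- reverse: construct γ
    rintro ⟨h1, h2⟩
    set F : ℝ → ℝ × ℝ := fun θ =>
      (-(∫ t in (0:ℝ)..θ, f t * Real.sin t), ∫ t in (0:ℝ)..θ, f t * Real.cos t) with hFdef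
    have hFd : ∀ θ, HasDerivAt F (f θ • eth θ) θ := by
      intro θ
      have hs : HasDerivAt (fun u => ∫ t in (0:ℝ)..u, f t * Real.sin t)
          (f θ * Real.sin θ) θ := (hgsc.integral_hasStrictDerivAt 0 θ).hasDerivAt
      have hc : HasDerivAt (fun u => ∫ t in (0:ℝ)..u, f t * Real.cos t)
          (f θ * Real.cos θ) θ := (hgcc.integral_hasStrictDerivAt 0 θ).hasDerivAt
      have := HasDerivAt.prodMk (hs.neg) hc
      have heq : (-(f θ * Real.sin θ), f θ * Real.cos θ) = f θ • eth θ := by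
        simp [eth, Prod.smul_def]
      rw [heq] at this
      exact this
    have hFderiv : ∀ θ, deriv F θ = f θ • eth θ := fun θ => (hFd θ).deriv
    have hFdiff : Differentiable ℝ F := fun θ => (hFd θ).differentiableAt
    -- periodicity
    have hintsub : ∀ (g : ℝ → ℝ), Continuous g → Function.Periodic g (2 * π) →
        (∫ t in (0:ℝ)..2 * π, g t) = 0 → ∀ θ,
        (∫ t in (0:ℝ)..θ + 2 * π, g t) = ∫ t in (0:ℝ)..θ, g t := by
      intro g hgc hgp hg0 θ
      have hsplit : (∫ t in (0:ℝ)..θ, g t) + (∫ t in θ..θ + 2 * π, g t)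
          = ∫ t in (0:ℝ)..θ + 2 * π, g t :=
        intervalIntegral.integral_add_adjacent_intervals
          (hgc.intervalIntegrable _ _) (hgc.intervalIntegrable _ _)
      have hshift : (∫ t in θ..θ + 2 * π, g t) = ∫ t in (0:ℝ)..0 + 2 * π, g t :=
        hgp.intervalIntegral_add_eq θ 0
      rw [zero_add, hg0] at hshift
      rw [← hsplit, hshift, add_zero]
    have hsinper : Function.Periodic (fun t => f t * Real.sin t) (2 * π) :=
      hfper.mul Real.sin_periodic
    have hcosper : Function.Periodic (fun t => f t * Real.cos t) (2 * π) :=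
      hfper.mul Real.cos_periodic
    have hFper : Function.Periodic F (2 * π) := by
      intro θ
      simp only [hFdef]
      rw [hintsub _ hgsc hsinper h1 θ, hintsub _ hgcc hcosper h2 θ]
    -- key injectivity step
    have key : ∀ u v : ℝ, u < v → v - u ≤ π → F u ≠ F v := by
      intro u v huv hle heq
      set c := (u + v) / 2 with hc
      have e1 : (∫ t in u..v, f t * Real.sin t) = 0 := by
        have := congrArg Prod.fst heq
        simp only [hFdef, neg_inj] at this
        rw [← intervalIntegral.integral_interval_sub_left
          (hgsc.intervalIntegrable 0 v) (hgsc.intervalIntegrable 0 u), this, sub_self]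
      have e2 : (∫ t in u..v, f t * Real.cos t) = 0 := by
        have := congrArg Prod.snd heq
        simp only [hFdef] at this
        rw [← intervalIntegral.integral_interval_sub_left
          (hgcc.intervalIntegrable 0 v) (hgcc.intervalIntegrable 0 u), this, sub_self]
      have hzero : (∫ t in u..v, f t * Real.cos (t - c)) = 0 := by
        have hrw : (fun t => f t * Real.cos (t - c))
            = fun t => Real.cos c * (f t * Real.cos t) + Real.sin c * (f t * Real.sin t) := by
          funext t; rw [Real.cos_sub]; ring
        rw [hrw, intervalIntegral.integral_add
            (f := fun t => Real.cos c * (f t * Real.cos t))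
            (g := fun t => Real.sin c * (f t * Real.sin t))
            (((continuous_const.mul hgcc)).intervalIntegrable u v)
            (((continuous_const.mul hgsc)).intervalIntegrable u v),
          intervalIntegral.integral_const_mul, intervalIntegral.integral_const_mul, e1, e2]
        ring
      have hpos : 0 < ∫ t in u..v, f t * Real.cos (t - c) := by
        apply intervalIntegral.intervalIntegral_pos_of_pos_on
        · exact (hfc.mul (Real.continuous_cos.comp (continuous_id.sub continuous_const))).intervalIntegrable u v
        · intro t ht
          apply mul_pos (hfpos t)
          apply Real.cos_pos_of_mem_Ioo
          constructor
          · have : -(π / 2) ≤ -((v - u) / 2) := by linarith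
            have h2 : -((v - u) / 2) < t - c := by
              simp only [hc]; linarith [ht.1]
            linarith
          · have h2 : t - c < (v - u) / 2 := by
              simp only [hc]; linarith [ht.2]
            linarith
        · exact huv
      rw [hzero] at hpos
      exact lt_irrefl 0 hpos
    have key2 : ∀ x y : ℝ, x ∈ Set.Ico 0 (2 * π) → y ∈ Set.Ico 0 (2 * π) → x < y →
        F x ≠ F y := by
      intro x y hx hy h heq
      rcases le_or_gt (y - x) π with hle | hgt
      · exact key x y h hle heq
      · have hFy : F (y - 2 * π) = F y := by
          have h' := hFper (y - 2 * π); rw [sub_add_cancel] at h'; exact h'.symm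
        exact key (y - 2 * π) x (by linarith [hy.2, hx.1]) (by linarith)
          (hFy.trans heq.symm)
    have hinj : Set.InjOn F (Set.Ico 0 (2 * π)) := by
      intro x hx y hy hxy
      by_contra hne
      rcases lt_or_gt_of_ne hne with h | h
      · exact key2 x y hx hy h hxy
      · exact key2 y x hy hx h hxy.symm
    -- smoothness
    have hF2 : ContDiff ℝ 2 F := by
      rw [show (2 : WithTop ℕ∞) = 1 + 1 from rfl, contDiff_succ_iff_deriv]
      refine ⟨hFdiff, by simp, ?_⟩
      have : deriv F = fun θ => f θ • eth θ := funext hFderiv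
      rw [this]
      exact hf1.smul ((ContDiff.prodMk (Real.contDiff_sin (n := 1)).neg Real.contDiff_cos) : ContDiff ℝ 1 eth)
    exact ⟨F, hF2, hFper, hinj, hFderiv⟩

end
end

section
/- Let k solve the Minkowski curvature evolution PDE ∂k/∂t = (a/(a+a''))k² k_{θθ} + (2a'/(a+a''))k² k_θ + k³ on S¹ × [0,T). Then the quantity t ↦ ∫₀^{2π} (a k)² − (∂(a k)/∂θ)² dθ is nondecreasing in t; indeed its time derivative equals 2∫₀^{2π} (a(a+a'')/k²)(∂k/∂t)² dθ ≥ 0. -/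
open Real Set MeasureTheory
open scoped ContDiff

noncomputable section

namespace Stmt19Aux

def p1 (k : ℝ → ℝ → ℝ) (θ t : ℝ) : ℝ := fderiv ℝ (Function.uncurry k) (θ, t) (1, 0)
def p2 (k : ℝ → ℝ → ℝ) (θ t : ℝ) : ℝ := fderiv ℝ (Function.uncurry k) (θ, t) (0, 1)

variable {k : ℝ → ℝ → ℝ}

lemma hasDerivAt_fst (hk : ContDiff ℝ ∞ (Function.uncurry k)) (θ t : ℝ) :
    HasDerivAt (fun θ' => k θ' t) (p1 k θ t) θ := by
  have h1 : HasDerivAt (fun θ' : ℝ => ((θ' : ℝ), t)) ((1 : ℝ), (0 : ℝ)) θ :=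
    (hasDerivAt_id θ).prodMk (hasDerivAt_const θ t)
  have h2 : HasFDerivAt (Function.uncurry k) (fderiv ℝ (Function.uncurry k) (θ, t)) (θ, t) :=
    (hk.differentiable (by norm_num) (θ, t)).hasFDerivAt
  exact h2.comp_hasDerivAt θ h1

lemma hasDerivAt_snd (hk : ContDiff ℝ ∞ (Function.uncurry k)) (θ t : ℝ) :
    HasDerivAt (fun t' => k θ t') (p2 k θ t) t := by
  have h1 : HasDerivAt (fun t' : ℝ => ((θ : ℝ), t')) ((0 : ℝ), (1 : ℝ)) t :=
    (hasDerivAt_const t θ).prodMk (hasDerivAt_id t)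
  have h2 : HasFDerivAt (Function.uncurry k) (fderiv ℝ (Function.uncurry k) (θ, t)) (θ, t) :=
    (hk.differentiable (by norm_num) (θ, t)).hasFDerivAt
  exact h2.comp_hasDerivAt t h1

lemma contDiff_fderiv_apply (hk : ContDiff ℝ ∞ (Function.uncurry k)) (w : ℝ × ℝ) :
    ContDiff ℝ ∞ (fun p : ℝ × ℝ => fderiv ℝ (Function.uncurry k) p w) := by
  have h : ContDiff ℝ ∞ (fderiv ℝ (Function.uncurry k)) :=
    hk.fderiv_right (by norm_num)
  exact (ContinuousLinearMap.apply ℝ ℝ w).contDiff.comp h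

lemma contDiff_p1 (hk : ContDiff ℝ ∞ (Function.uncurry k)) :
    ContDiff ℝ ∞ (Function.uncurry (p1 k)) :=
  contDiff_fderiv_apply hk ((1 : ℝ), (0 : ℝ))

lemma contDiff_p2 (hk : ContDiff ℝ ∞ (Function.uncurry k)) :
    ContDiff ℝ ∞ (Function.uncurry (p2 k)) :=
  contDiff_fderiv_apply hk ((0 : ℝ), (1 : ℝ))

lemma fderiv_fderiv_apply (hk : ContDiff ℝ ∞ (Function.uncurry k)) (w v p : ℝ × ℝ) :
    fderiv ℝ (fun q => fderiv ℝ (Function.uncurry k) q w) p v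
      = fderiv ℝ (fderiv ℝ (Function.uncurry k)) p v w := by
  have hcd : ContDiff ℝ ∞ (fderiv ℝ (Function.uncurry k)) := hk.fderiv_right (by norm_num)
  have hd : DifferentiableAt ℝ (fderiv ℝ (Function.uncurry k)) p :=
    (hcd.differentiable (by norm_num)) p
  have : (fun q => fderiv ℝ (Function.uncurry k) q w)
      = (ContinuousLinearMap.apply ℝ ℝ w) ∘ (fderiv ℝ (Function.uncurry k)) := rfl
  rw [this, fderiv_comp p (ContinuousLinearMap.apply ℝ ℝ w).differentiableAt hd]
  simp

lemma mixed_symm (hk : ContDiff ℝ ∞ (Function.uncurry k)) (θ t : ℝ) :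
    p2 (p1 k) θ t = p1 (p2 k) θ t := by
  have hK : ∀ y, HasFDerivAt (Function.uncurry k) (fderiv ℝ (Function.uncurry k) y) y :=
    fun y => ((hk.differentiable (by norm_num)) y).hasFDerivAt
  have hcd : ContDiff ℝ ∞ (fderiv ℝ (Function.uncurry k)) := hk.fderiv_right (by norm_num)
  have hx : HasFDerivAt (fderiv ℝ (Function.uncurry k))
      (fderiv ℝ (fderiv ℝ (Function.uncurry k)) (θ, t)) (θ, t) :=
    ((hcd.differentiable (by norm_num)) (θ, t)).hasFDerivAt
  have hsymm := second_derivative_symmetric hK hx ((0 : ℝ), (1 : ℝ)) ((1 : ℝ), (0 : ℝ))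
  have e1 : p2 (p1 k) θ t
      = fderiv ℝ (fderiv ℝ (Function.uncurry k)) (θ, t) ((0 : ℝ), (1 : ℝ)) ((1 : ℝ), (0 : ℝ)) := by
    have h : Function.uncurry (p1 k)
        = fun p : ℝ × ℝ => fderiv ℝ (Function.uncurry k) p ((1 : ℝ), (0 : ℝ)) := rfl
    rw [p2, h, fderiv_fderiv_apply hk]
  have e2 : p1 (p2 k) θ t
      = fderiv ℝ (fderiv ℝ (Function.uncurry k)) (θ, t) ((1 : ℝ), (0 : ℝ)) ((0 : ℝ), (1 : ℝ)) := by
    have h : Function.uncurry (p2 k)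
        = fun p : ℝ × ℝ => fderiv ℝ (Function.uncurry k) p ((0 : ℝ), (1 : ℝ)) := rfl
    rw [p1, h, fderiv_fderiv_apply hk]
  rw [e1, e2, hsymm]

lemma deriv_periodic {f : ℝ → ℝ} {c : ℝ} (hf : Function.Periodic f c) (x : ℝ) :
    deriv f (x + c) = deriv f x := by
  rw [← deriv_comp_add_const]
  congr 1
  funext y
  exact hf y

end Stmt19Aux

open Stmt19Aux

/-- Monotonicity of `∫ (ak)² − ((ak)_θ)² dθ` along the Minkowski curvature
evolution equation. -/
theorem stmt19 (a : ℝ → ℝ) (ha : ContDiff ℝ (⊤ : ℕ∞) a) (haper : Function.Periodic a (2 * π))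
    (hapos : ∀ θ, 0 < a θ) (hconv : ∀ θ, 0 < a θ + deriv (deriv a) θ)
    (p : ℝ → ℝ × ℝ) (hp : ∀ θ, p θ = a θ • er θ + deriv a θ • eth θ)
    (q : ℝ → ℝ × ℝ) (hq : ∀ θ, q θ = (det2 (p θ) (deriv p θ))⁻¹ • deriv p θ)
    (T : ℝ) (hT : 0 < T) (k : ℝ → ℝ → ℝ)
    (hk : ContDiff ℝ (⊤ : ℕ∞) (Function.uncurry k)) (hkpos : ∀ θ t, 0 < k θ t)
    (hkper : ∀ t, Function.Periodic (fun θ => k θ t) (2 * π))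
    (hpde : ∀ θ : ℝ, ∀ t ∈ Set.Ico 0 T, HasDerivAt (fun t' => k θ t')
      (a θ / (a θ + deriv (deriv a) θ) * (k θ t) ^ 2 * deriv (deriv (fun θ' => k θ' t)) θ +
        2 * deriv a θ / (a θ + deriv (deriv a) θ) * (k θ t) ^ 2 * deriv (fun θ' => k θ' t) θ +
        (k θ t) ^ 3) t)
    (I : ℝ → ℝ)
    (hI : ∀ t, I t = ∫ θ in (0:ℝ)..2 * π,
      ((a θ * k θ t) ^ 2 - (deriv (fun θ' => a θ' * k θ' t) θ) ^ 2)) :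
    (∀ t ∈ Set.Ico (0:ℝ) T, deriv I t =
        2 * ∫ θ in (0:ℝ)..2 * π,
          (a θ * (a θ + deriv (deriv a) θ) / (k θ t) ^ 2) * (deriv (fun t' => k θ t') t) ^ 2) ∧
      MonotoneOn I (Set.Ico 0 T) := by
  have hk' : ContDiff ℝ ∞ (Function.uncurry k) := hk.of_le (by simp)
  have ha1 : ContDiff ℝ ∞ a := ha.of_le (by simp)
  have hda : Differentiable ℝ a := ha1.differentiable (by norm_num)
  have hca' : ContDiff ℝ ∞ (deriv a) := (contDiff_infty_iff_deriv.mp ha1).2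
  have hda' : Differentiable ℝ (deriv a) := hca'.differentiable (by norm_num)
  have hca'' : ContDiff ℝ ∞ (deriv (deriv a)) := (contDiff_infty_iff_deriv.mp hca').2
  -- continuity of relevant jointly-defined functions
  have ck : Continuous (Function.uncurry k) := hk'.continuous
  have ck1 : Continuous (Function.uncurry (p1 k)) := (contDiff_p1 hk').continuous
  have ck2 : Continuous (Function.uncurry (p2 k)) := (contDiff_p2 hk').continuous
  have ck12 : Continuous (Function.uncurry (p2 (p1 k))) :=
    (contDiff_p2 (contDiff_p1 hk')).continuous
  have ckk : ∀ x : ℝ, Continuous (fun θ => k θ x) := fun x =>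
    ck.comp (continuous_id.prodMk continuous_const)
  have ckk1 : ∀ x : ℝ, Continuous (fun θ => p1 k θ x) := fun x =>
    ck1.comp (continuous_id.prodMk continuous_const)
  have ckk2 : ∀ x : ℝ, Continuous (fun θ => p2 k θ x) := fun x =>
    ck2.comp (continuous_id.prodMk continuous_const)
  have ckk12 : ∀ x : ℝ, Continuous (fun θ => p2 (p1 k) θ x) := fun x =>
    ck12.comp (continuous_id.prodMk continuous_const)
  have ckk11 : ∀ x : ℝ, Continuous (fun θ => p1 (p1 k) θ x) := fun x =>
    ((contDiff_p1 (contDiff_p1 hk')).continuous).comp (continuous_id.prodMk continuous_const)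
  -- the integrand and its time derivative
  set F : ℝ → ℝ → ℝ := fun x θ =>
    (a θ * k θ x) ^ 2 - (deriv a θ * k θ x + a θ * p1 k θ x) ^ 2 with hFdef
  set F' : ℝ → ℝ → ℝ := fun x θ =>
    2 * (a θ * k θ x) * (a θ * p2 k θ x) -
      2 * (deriv a θ * k θ x + a θ * p1 k θ x) *
        (deriv a θ * p2 k θ x + a θ * p2 (p1 k) θ x) with hF'def
  -- I is the integral of F
  have hIF : ∀ x, I x = ∫ θ in (0:ℝ)..2 * π, F x θ := by
    intro x
    rw [hI x]
    apply intervalIntegral.integral_congr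
    intro θ _
    have hd : deriv (fun θ' => a θ' * k θ' x) θ = deriv a θ * k θ x + a θ * p1 k θ x :=
      ((hda θ).hasDerivAt.mul (hasDerivAt_fst hk' θ x)).deriv
    simp only [hFdef, hd]
  -- time derivative of F
  have hFderiv : ∀ x θ : ℝ, HasDerivAt (fun x' => F x' θ) (F' x θ) x := by
    intro x θ
    have h1 : HasDerivAt (fun x' => a θ * k θ x') (a θ * p2 k θ x) x :=
      (hasDerivAt_snd hk' θ x).const_mul (a θ)
    have h2 : HasDerivAt (fun x' => deriv a θ * k θ x' + a θ * p1 k θ x')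
        (deriv a θ * p2 k θ x + a θ * p2 (p1 k) θ x) x :=
      ((hasDerivAt_snd hk' θ x).const_mul (deriv a θ)).add
        ((hasDerivAt_snd (contDiff_p1 hk') θ x).const_mul (a θ))
    have := (h1.pow 2).sub (h2.pow 2)
    exact this.congr_deriv (by simp only [hF'def]; ring)
  -- joint continuity of F'
  have cF' : Continuous (fun pr : ℝ × ℝ => F' pr.1 pr.2) := by
    simp only [hF'def]
    have c1 : Continuous (fun pr : ℝ × ℝ => a pr.2) := ha1.continuous.comp continuous_snd
    have c2 : Continuous (fun pr : ℝ × ℝ => deriv a pr.2) := hca'.continuous.comp continuous_snd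
    have c3 : Continuous (fun pr : ℝ × ℝ => k pr.2 pr.1) := ck.comp continuous_swap
    have c4 : Continuous (fun pr : ℝ × ℝ => p1 k pr.2 pr.1) := ck1.comp continuous_swap
    have c5 : Continuous (fun pr : ℝ × ℝ => p2 k pr.2 pr.1) := ck2.comp continuous_swap
    have c6 : Continuous (fun pr : ℝ × ℝ => p2 (p1 k) pr.2 pr.1) := ck12.comp continuous_swap
    exact ((continuous_const.mul (c1.mul c3)).mul (c1.mul c5)).sub
      ((continuous_const.mul ((c2.mul c3).add (c1.mul c4))).mul ((c2.mul c5).add (c1.mul c6)))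
  -- derivative of I on Ico 0 T
  have hDI : ∀ t₀ ∈ Set.Ico (0:ℝ) T,
      HasDerivAt I (∫ θ in (0:ℝ)..2 * π, F' t₀ θ) t₀ := by
    intro t₀ _
    -- uniform bound on a compact neighbourhood
    obtain ⟨M, hM⟩ : ∃ M, ∀ pr ∈ (Icc (t₀ - 1) (t₀ + 1)) ×ˢ (Icc (0:ℝ) (2 * π)),
        ‖F' pr.1 pr.2‖ ≤ M := by
      rcases (isCompact_Icc.prod isCompact_Icc).exists_bound_of_continuousOn
        (cF'.continuousOn) with ⟨M, hM⟩
      exact ⟨M, fun pr hpr => hM pr hpr⟩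
    have key := intervalIntegral.hasDerivAt_integral_of_dominated_loc_of_deriv_le
      (F := F) (F' := F') (x₀ := t₀) (a := (0:ℝ)) (b := 2 * π) (μ := volume)
      (bound := fun _ => M) (Metric.ball_mem_nhds t₀ one_pos)
      (Filter.Eventually.of_forall (fun x =>
        (Continuous.aestronglyMeasurable (by
          have : Continuous (fun θ => F x θ) := by
            have c1 : Continuous (fun θ : ℝ => a θ) := ha1.continuous
            have c2 : Continuous (fun θ : ℝ => deriv a θ) := hca'.continuous
            simp only [hFdef]
            exact (((c1.mul (ckk x)).pow 2).sub
              (((c2.mul (ckk x)).add (c1.mul (ckk1 x))).pow 2))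
          exact this))))
      (by
        apply Continuous.intervalIntegrable
        have c1 : Continuous (fun θ : ℝ => a θ) := ha1.continuous
        have c2 : Continuous (fun θ : ℝ => deriv a θ) := hca'.continuous
        simp only [hFdef]
        exact (((c1.mul (ckk t₀)).pow 2).sub
          (((c2.mul (ckk t₀)).add (c1.mul (ckk1 t₀))).pow 2)))
      ((cF'.comp (continuous_const.prodMk continuous_id)).aestronglyMeasurable)
      (Filter.Eventually.of_forall (fun θ => by
        intro hθ x hx
        apply hM (x, θ)
        constructor
        · have : |x - t₀| < 1 := by simpa [Real.dist_eq] using hx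
          constructor <;> [linarith [abs_lt.mp this |>.1]; linarith [abs_lt.mp this |>.2]]
        · rw [Set.uIoc_of_le (by positivity : (0:ℝ) ≤ 2 * π)] at hθ
          exact ⟨hθ.1.le, hθ.2⟩))
      (intervalIntegrable_const)
      (Filter.Eventually.of_forall (fun θ _ x _ => hFderiv x θ))
    have hfun : I = fun x => ∫ θ in (0:ℝ)..2 * π, F x θ := funext hIF
    rw [hfun]
    exact key.2
  -- the key integral identity
  have hkey : ∀ t₀ ∈ Set.Ico (0:ℝ) T, (∫ θ in (0:ℝ)..2 * π, F' t₀ θ)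
      = 2 * ∫ θ in (0:ℝ)..2 * π,
          (a θ * (a θ + deriv (deriv a) θ) / (k θ t₀) ^ 2) * (p2 k θ t₀) ^ 2 := by
    intro t₀ ht₀
    have c1 : Continuous a := ha1.continuous
    have c2 : Continuous (deriv a) := hca'.continuous
    have c2' : Continuous (deriv (deriv a)) := hca''.continuous
    have ckk21 : Continuous (fun θ => p1 (p2 k) θ t₀) :=
      ((contDiff_p1 (contDiff_p2 hk')).continuous).comp (continuous_id.prodMk continuous_const)
    -- abbreviations for the relevant θ-functions at time t₀
    set u : ℝ → ℝ := fun θ => a θ * k θ t₀ with hudef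
    set u' : ℝ → ℝ := fun θ => deriv a θ * k θ t₀ + a θ * p1 k θ t₀ with hu'def
    set u'' : ℝ → ℝ := fun θ => deriv (deriv a) θ * k θ t₀ + deriv a θ * p1 k θ t₀ +
        (deriv a θ * p1 k θ t₀ + a θ * p1 (p1 k) θ t₀) with hu''def
    set v : ℝ → ℝ := fun θ => a θ * p2 k θ t₀ with hvdef
    set v' : ℝ → ℝ := fun θ => deriv a θ * p2 k θ t₀ + a θ * p1 (p2 k) θ t₀ with hv'def
    have hu''at : ∀ θ, HasDerivAt u' (u'' θ) θ := fun θ =>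
      ((hda' θ).hasDerivAt.mul (hasDerivAt_fst hk' θ t₀)).add
        ((hda θ).hasDerivAt.mul (hasDerivAt_fst (contDiff_p1 hk') θ t₀))
    have hvat : ∀ θ, HasDerivAt v (v' θ) θ := fun θ =>
      (hda θ).hasDerivAt.mul (hasDerivAt_fst (contDiff_p2 hk') θ t₀)
    -- continuity of the pieces
    have cu : Continuous u := c1.mul (ckk t₀)
    have cu' : Continuous u' := (c2.mul (ckk t₀)).add (c1.mul (ckk1 t₀))
    have cu'' : Continuous u'' :=
      ((c2'.mul (ckk t₀)).add (c2.mul (ckk1 t₀))).add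
        ((c2.mul (ckk1 t₀)).add (c1.mul (ckk11 t₀)))
    have cv : Continuous v := c1.mul (ckk2 t₀)
    have cv' : Continuous v' := (c2.mul (ckk2 t₀)).add (c1.mul ckk21)
    -- integration by parts
    have hparts := intervalIntegral.integral_deriv_mul_eq_sub (a := (0:ℝ)) (b := 2*π)
      (u := u') (v := v) (u' := u'') (v' := v')
      (fun θ _ => hu''at θ) (fun θ _ => hvat θ)
      (cu''.intervalIntegrable 0 (2*π)) (cv'.intervalIntegrable 0 (2*π))
    -- the boundary term vanishes by periodicity
    have ea : a (2*π) = a 0 := by simpa using haper 0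
    have ea' : deriv a (2*π) = deriv a 0 := by simpa using deriv_periodic haper 0
    have ek : k (2*π) t₀ = k 0 t₀ := by simpa using hkper t₀ 0
    have hp1d : ∀ θ, p1 k θ t₀ = deriv (fun θ' => k θ' t₀) θ := fun θ =>
      ((hasDerivAt_fst hk' θ t₀).deriv).symm
    have ek1 : p1 k (2*π) t₀ = p1 k 0 t₀ := by
      rw [hp1d, hp1d]
      simpa using deriv_periodic (hkper t₀) 0
    have ek2 : p2 k (2*π) t₀ = p2 k 0 t₀ := by
      have hfun : (fun t' => k (2*π) t') = fun t' => k 0 t' :=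
        funext fun t' => by simpa using hkper t' 0
      rw [← (hasDerivAt_snd hk' (2*π) t₀).deriv, ← (hasDerivAt_snd hk' 0 t₀).deriv, hfun]
    have hbd : u' (2*π) * v (2*π) - u' 0 * v 0 = 0 := by
      simp only [hu'def, hvdef, ea, ea', ek, ek1, ek2, sub_self]
    rw [hbd] at hparts
    -- split the integral
    have hsplit : (∫ θ in (0:ℝ)..2*π, u'' θ * v θ) + (∫ θ in (0:ℝ)..2*π, u' θ * v' θ) = 0 := by
      rw [← intervalIntegral.integral_add (show IntervalIntegrable (fun θ => u'' θ * v θ) volume 0 (2*π) from (cu''.mul cv).intervalIntegrable 0 (2*π))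
        (show IntervalIntegrable (fun θ => u' θ * v' θ) volume 0 (2*π) from (cu'.mul cv').intervalIntegrable 0 (2*π))]
      exact hparts
    -- rewrite F' using symmetry of second derivatives
    have hF'eq : ∀ θ, F' t₀ θ = 2 * (u θ * v θ) - 2 * (u' θ * v' θ) := by
      intro θ
      simp only [hF'def, hudef, hu'def, hvdef, hv'def, mixed_symm hk' θ t₀]
      ring
    have e1 : (∫ θ in (0:ℝ)..2*π, F' t₀ θ)
        = 2 * (∫ θ in (0:ℝ)..2*π, u θ * v θ) - 2 * (∫ θ in (0:ℝ)..2*π, u' θ * v' θ) := by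
      rw [show (fun θ => F' t₀ θ) = fun θ => 2 * (u θ * v θ) - 2 * (u' θ * v' θ) from
        funext hF'eq]
      rw [intervalIntegral.integral_sub
        (show IntervalIntegrable (fun θ => 2 * (u θ * v θ)) volume 0 (2*π) from (continuous_const.mul (cu.mul cv)).intervalIntegrable 0 (2*π))
        (show IntervalIntegrable (fun θ => 2 * (u' θ * v' θ)) volume 0 (2*π) from (continuous_const.mul (cu'.mul cv')).intervalIntegrable 0 (2*π)),
        intervalIntegral.integral_const_mul, intervalIntegral.integral_const_mul]
    have e2 : (∫ θ in (0:ℝ)..2*π, F' t₀ θ)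
        = 2 * ((∫ θ in (0:ℝ)..2*π, u θ * v θ) + (∫ θ in (0:ℝ)..2*π, u'' θ * v θ)) := by
      rw [e1]; linarith [hsplit]
    have e3 : (∫ θ in (0:ℝ)..2*π, u θ * v θ) + (∫ θ in (0:ℝ)..2*π, u'' θ * v θ)
        = ∫ θ in (0:ℝ)..2*π, (u θ * v θ + u'' θ * v θ) := by
      rw [intervalIntegral.integral_add (show IntervalIntegrable (fun θ => u θ * v θ) volume 0 (2*π) from (cu.mul cv).intervalIntegrable 0 (2*π))
        (show IntervalIntegrable (fun θ => u'' θ * v θ) volume 0 (2*π) from (cu''.mul cv).intervalIntegrable 0 (2*π))]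
    -- the pointwise identity coming from the PDE
    have hpt : ∀ θ, u θ * v θ + u'' θ * v θ
        = (a θ * (a θ + deriv (deriv a) θ) / (k θ t₀) ^ 2) * (p2 k θ t₀) ^ 2 := by
      intro θ
      have hc0 : a θ + deriv (deriv a) θ ≠ 0 := ne_of_gt (hconv θ)
      have hk0 : k θ t₀ ≠ 0 := ne_of_gt (hkpos θ t₀)
      have hdθfun : deriv (fun θ' => k θ' t₀) = fun θ' => p1 k θ' t₀ :=
        funext fun θ' => (hasDerivAt_fst hk' θ' t₀).deriv
      have hdθθ : deriv (deriv (fun θ' => k θ' t₀)) θ = p1 (p1 k) θ t₀ := by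
        rw [hdθfun]; exact (hasDerivAt_fst (contDiff_p1 hk') θ t₀).deriv
      have hp2 : p2 k θ t₀ = a θ / (a θ + deriv (deriv a) θ) * (k θ t₀) ^ 2 * p1 (p1 k) θ t₀ +
          2 * deriv a θ / (a θ + deriv (deriv a) θ) * (k θ t₀) ^ 2 * p1 k θ t₀ +
          (k θ t₀) ^ 3 := by
        have h := (hasDerivAt_snd hk' θ t₀).unique (hpde θ t₀ ht₀)
        rw [h, hdθθ, ← hp1d θ]
      simp only [hudef, hu''def, hvdef]
      rw [hp2]
      field_simp
      ring
    rw [e2, e3]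
    congr 1
    exact intervalIntegral.integral_congr (fun θ _ => hpt θ)
  constructor
  · intro t ht
    have h1 : deriv I t = ∫ θ in (0:ℝ)..2 * π, F' t θ := (hDI t ht).deriv
    rw [h1, hkey t ht]
    congr 1
    apply intervalIntegral.integral_congr
    intro θ _
    dsimp only
    rw [(hasDerivAt_snd hk' θ t).deriv]
  · apply monotoneOn_of_deriv_nonneg (convex_Ico 0 T)
    · intro x hx
      exact ((hDI x hx).differentiableAt.continuousAt).continuousWithinAt
    · rw [interior_Ico]
      intro x hx
      exact ((hDI x (Ioo_subset_Ico_self hx)).differentiableAt).differentiableWithinAt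
    · rw [interior_Ico]
      intro x hx
      have hx' : x ∈ Set.Ico (0:ℝ) T := Ioo_subset_Ico_self hx
      rw [(hDI x hx').deriv, hkey x hx']
      have : (0:ℝ) ≤ ∫ θ in (0:ℝ)..2 * π,
          (a θ * (a θ + deriv (deriv a) θ) / (k θ x) ^ 2) * (p2 k θ x) ^ 2 := by
        apply intervalIntegral.integral_nonneg (by positivity)
        intro θ
        intro _
        exact mul_nonneg (div_nonneg (mul_nonneg (hapos θ).le (hconv θ).le)
          (sq_nonneg _)) (sq_nonneg _)
      linarith
end
end
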